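/- Let p ≥ 2 and let α_1, …, α_p, β_1, …, β_{p−1} ∈ ℂ[[y]] be such that f = ∏_{i=1}^p (X − α_i) ∈ ℂ[[y]][X] has derivative (with respect to X) equal to p · ∏_{j=1}^{p−1} (X − β_j). Let j ∈ {1,…,p−1} be such that β_j is not equal to any α_i. Then h := max_{i} O(α_i, β_j) is a (finite) natural number; choose k attaining this maximum and set S = {i : O(α_i, α_k) ≥ h}, F(z) = ∏_{i∈S} (z − coeff_h(α_i)), q = Σ_{i=1}^p min(h, O(α_k, α_i)), b = coeff_h(β_j), and C = ∏_{i∉S} coeff_{d_i}(α_k − α_i) with d_i = O(α_k, α_i). Then F'(b) = 0, F(b) ≠ 0, and the power series ∏_{i=1}^p (β_j − α_i) has order exactly q, with coefficient at y^q equal to C · F(b). -/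

import Mathlib

/-!
Write `β = β_j`. By the ultrametric inequality applied to `β - α_i = (β - α_k) + (α_k - α_i)`,
the series `β - α_i` has order `m_i = min(h, O(α_k, α_i))`, and its coefficient at `y^{m_i}` is
`b - coeff_h α_i` for `i ∈ S` and the leading coefficient of `α_k - α_i` otherwise; multiplying
gives the order `q` and the leading coefficient `C · F(b)` of `∏ (β - α_i)`.
Evaluating `f' = p ∏ (X - β_l)` at `β` gives `∑_i ∏_{l ≠ i} (β - α_l) = 0`. At `y^{q-h}` the
summands with `i ∉ S` vanish (their order is `q - m_i > q - h`) and those with `i ∈ S` contribute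
`C · ∏_{l ∈ S \ {i}} (b - coeff_h α_l)`, so `C · F'(b) = 0`, while `C ≠ 0` since `C · F(b) ≠ 0`.
-/

open PowerSeries Finset

theorem Polynomial.eval_derivative_prod_X_sub_C {R ι : Type*} [CommRing R] [DecidableEq ι]
    (s : Finset ι) (a : ι → R) (x : R) :
    (Polynomial.derivative (∏ i ∈ s, (Polynomial.X - Polynomial.C (a i)))).eval x
      = ∑ i ∈ s, ∏ l ∈ s.erase i, (x - a l) := by
  simp [Polynomial.derivative_prod_finset, Polynomial.eval_finsetSum, Polynomial.eval_prod]

theorem Finset.prod_univ_erase_of_mem {ι M : Type*} [Fintype ι] [DecidableEq ι] [CommMonoid M]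
    {T : Finset ι} {i : ι} (hi : i ∈ T) (f : ι → M) :
    ∏ l ∈ univ.erase i, f l = (∏ l ∈ T.erase i, f l) * ∏ l ∈ Tᶜ, f l := by
  rw [← prod_union (disjoint_compl_right.mono_left (erase_subset i T))]
  congr 1
  ext l
  simp only [mem_erase, mem_univ, and_true, mem_union, mem_compl]
  grind

theorem ENat.natCast_toNat_min (h : ℕ) (e : ℕ∞) : ((min (h : ℕ∞) e).toNat : ℕ∞) = min (h : ℕ∞) e :=
  ENat.natCast_toNat ((min_le_left _ _).trans_lt (ENat.natCast_lt_top h)).ne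

namespace PowerSeries

variable {R ι : Type*}

theorem order_sub_comm [Ring R] (φ ψ : R⟦X⟧) : (φ - ψ).order = (ψ - φ).order := by
  rw [← neg_sub, order_neg]

theorem order_sub_eq_min [Ring R] {a b c : R⟦X⟧} {h : ℕ∞} (hab : (b - a).order = h)
    (hcb : (b - c).order ≤ h) : (b - c).order = min h (a - c).order := by
  rw [← sub_add_sub_cancel b a c] at hcb ⊢
  refine le_antisymm ?_ (hab ▸ min_order_le_order_add _ _)
  rcases le_or_gt h (a - c).order with hh | hh
  · rwa [min_eq_left hh]
  · rw [order_add_of_order_ne _ _ (hab ▸ hh.ne'), hab]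

theorem coeff_prod_of_X_pow_dvd [CommSemiring R] {φ : ι → R⟦X⟧} {m : ι → ℕ}
    (hφ : ∀ i, X ^ m i ∣ φ i) (s : Finset ι) :
    coeff (∑ i ∈ s, m i) (∏ i ∈ s, φ i) = ∏ i ∈ s, coeff (m i) (φ i) := by
  choose ψ hψ using hφ
  have hcoeff (n : ℕ) (χ : R⟦X⟧) : coeff n (X ^ n * χ) = constantCoeff χ := by
    simpa using coeff_X_pow_mul χ n 0
  simp_rw [hψ, prod_mul_distrib, prod_pow_eq_pow_sum, hcoeff, map_prod]

theorem X_pow_sum_dvd_prod [CommSemiring R] {φ : ι → R⟦X⟧} {m : ι → ℕ}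
    (hφ : ∀ i, X ^ m i ∣ φ i) (s : Finset ι) : X ^ (∑ i ∈ s, m i) ∣ ∏ i ∈ s, φ i :=
  prod_pow_eq_pow_sum s m (X : R⟦X⟧) ▸ prod_dvd_prod_of_dvd _ _ fun i _ => hφ i

theorem coeff_sum_prod_erase_of_X_pow_dvd [CommSemiring R] [Fintype ι] [DecidableEq ι]
    {φ : ι → R⟦X⟧} {m : ι → ℕ} (hφ : ∀ i, X ^ m i ∣ φ i) {k : ι} (hk : ∀ i, m i ≤ m k)
    {T : Finset ι} (hT : ∀ i, i ∈ T ↔ m i = m k) :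
    coeff (∑ i, m i - m k) (∑ i, ∏ l ∈ univ.erase i, φ l)
      = (∏ l ∈ Tᶜ, coeff (m l) (φ l)) * ∑ i ∈ T, ∏ l ∈ T.erase i, coeff (m l) (φ l) := by
  have hsum (i : ι) : ∑ l ∈ univ.erase i, m l = ∑ l, m l - m i := by
    rw [← sum_erase_add _ _ (mem_univ i)]; omega
  rw [map_sum, mul_sum, ← sum_subset (subset_univ T)]
  · refine sum_congr rfl fun i hi => ?_
    rw [← (hT i).1 hi, ← hsum, coeff_prod_of_X_pow_dvd hφ, prod_univ_erase_of_mem hi, mul_comm]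
  · intro i _ hi
    have hlt : m i < m k := lt_of_le_of_ne (hk i) (mt (hT i).2 hi)
    refine X_pow_dvd_iff.1 (X_pow_sum_dvd_prod hφ _) _ ?_
    have := single_le_sum (fun l _ => Nat.zero_le (m l)) (mem_univ k)
    rw [hsum]; omega

section ContactOrders

variable [CommRing R] {α : ι → R⟦X⟧} {β : R⟦X⟧} {k : ι} {h : ℕ}

theorem order_sub_eq_toNat_min (hk : (β - α k).order = h) (hmax : ∀ i, (β - α i).order ≤ h)
    (i : ι) : (β - α i).order = (min (h : ℕ∞) (α k - α i).order).toNat := by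
  rw [ENat.natCast_toNat_min, order_sub_eq_min hk (hmax i)]

theorem X_pow_toNat_min_dvd_sub (hk : (β - α k).order = h) (hmax : ∀ i, (β - α i).order ≤ h)
    (i : ι) : X ^ (min (h : ℕ∞) (α k - α i).order).toNat ∣ β - α i := by
  simpa [order_sub_eq_toNat_min hk hmax i] using X_pow_order_dvd (φ := β - α i)

theorem coeff_toNat_min_sub (hk : (β - α k).order = h) (i : ι) :
    coeff (min (h : ℕ∞) (α k - α i).order).toNat (β - α i)
      = if (h : ℕ∞) ≤ (α i - α k).order then coeff h β - coeff h (α i)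
        else coeff (α k - α i).order.toNat (α k - α i) := by
  rw [order_sub_comm (α i)]
  split_ifs with hi
  · simp [min_eq_left hi]
  · push Not at hi
    have hfin : ((α k - α i).order.toNat : ℕ∞) = (α k - α i).order := ENat.natCast_toNat hi.ne_top
    rw [min_eq_right hi.le, ← sub_add_sub_cancel β (α k) (α i), map_add,
      coeff_of_lt_order _ (by rwa [hk, hfin]), zero_add]

theorem toNat_min_order_sub_eq_iff (i : ι) :
    (min (h : ℕ∞) (α k - α i).order).toNat = (min (h : ℕ∞) (α k - α k).order).toNat
      ↔ (h : ℕ∞) ≤ (α i - α k).order := by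
  rw [← Nat.cast_inj (R := ℕ∞), ENat.natCast_toNat_min, ENat.natCast_toNat_min, sub_self,
    order_zero, min_top_right, min_eq_left_iff, order_sub_comm]

variable [Fintype ι] [DecidableEq ι] {S : Finset ι}

theorem coeff_prod_sub (hk : (β - α k).order = h) (hmax : ∀ i, (β - α i).order ≤ h)
    (hS : ∀ i, i ∈ S ↔ (h : ℕ∞) ≤ (α i - α k).order) :
    coeff (∑ i, (min (h : ℕ∞) (α k - α i).order).toNat) (∏ i, (β - α i))
      = (∏ i ∈ Sᶜ, coeff (α k - α i).order.toNat (α k - α i))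
        * ∏ i ∈ S, (coeff h β - coeff h (α i)) := by
  have hS' : S = univ.filter fun i => (h : ℕ∞) ≤ (α i - α k).order := by ext i; simp [hS]
  rw [coeff_prod_of_X_pow_dvd (X_pow_toNat_min_dvd_sub hk hmax)]
  simp_rw [coeff_toNat_min_sub hk, prod_ite, hS', compl_filter, mul_comm]

theorem coeff_sum_prod_erase_sub (hk : (β - α k).order = h) (hmax : ∀ i, (β - α i).order ≤ h)
    (hS : ∀ i, i ∈ S ↔ (h : ℕ∞) ≤ (α i - α k).order) :
    coeff (∑ i, (min (h : ℕ∞) (α k - α i).order).toNat - h)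
        (∑ i, ∏ l ∈ univ.erase i, (β - α l))
      = (∏ i ∈ Sᶜ, coeff (α k - α i).order.toNat (α k - α i))
        * ∑ i ∈ S, ∏ l ∈ S.erase i, (coeff h β - coeff h (α l)) := by
  have hkk : (min (h : ℕ∞) (α k - α k).order).toNat = h := by simp
  have hle (i : ι) : (min (h : ℕ∞) (α k - α i).order).toNat ≤ h :=
    ENat.toNat_le_of_le_natCast (min_le_left _ _)
  have key := coeff_sum_prod_erase_of_X_pow_dvd (X_pow_toNat_min_dvd_sub hk hmax)
    (fun i => (hle i).trans hkk.ge) fun i => (hS i).trans (toNat_min_order_sub_eq_iff i).symm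
  rw [hkk] at key
  rw [key]
  congr 1
  · exact prod_congr rfl fun i hi => by
      rw [coeff_toNat_min_sub hk, if_neg (by simpa [hS] using hi)]
  · exact sum_congr rfl fun i _ => prod_congr rfl fun l hl => by
      rw [coeff_toNat_min_sub hk, if_pos ((hS l).1 (mem_of_mem_erase hl))]

end ContactOrders

end PowerSeries

theorem stmt_5_general (p : ℕ) (α : Fin p → PowerSeries ℂ)
    (β : Fin (p - 1) → PowerSeries ℂ)
    (hder : Polynomial.derivative (∏ i, (Polynomial.X - Polynomial.C (α i)))
      = (p : Polynomial (PowerSeries ℂ)) * ∏ j, (Polynomial.X - Polynomial.C (β j)))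
    (j : Fin (p - 1)) (hβ : ∀ i, β j ≠ α i) :
    ∃ h : ℕ, Finset.univ.sup (fun i => (α i - β j).order) = (h : ℕ∞) ∧
      (∃ k : Fin p, (α k - β j).order = (h : ℕ∞)) ∧
      ∀ k : Fin p, (α k - β j).order = (h : ℕ∞) →
        ∀ (S : Finset (Fin p)),
          S = (Finset.univ.filter fun i => (h : ℕ∞) ≤ (α i - α k).order) →
        ∀ (F : Polynomial ℂ),
          F = ∏ i ∈ S, (Polynomial.X - Polynomial.C (PowerSeries.coeff h (α i))) →
        ∀ (q : ℕ), q = ∑ i, (min (h : ℕ∞) ((α k - α i).order)).toNat →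
        ∀ (b : ℂ), b = PowerSeries.coeff h (β j) →
        ∀ (C : ℂ),
          C = ∏ i ∈ Sᶜ, PowerSeries.coeff ((α k - α i).order.toNat) (α k - α i) →
          F.derivative.eval b = 0 ∧ F.eval b ≠ 0 ∧
          (∏ i, (β j - α i)).order = (q : ℕ∞) ∧
          PowerSeries.coeff q (∏ i, (β j - α i)) = C * F.eval b := by
  have : Nonempty (Fin p) := ⟨⟨0, by have := j.2; omega⟩⟩
  obtain ⟨k₀, -, hk₀⟩ := exists_mem_eq_sup univ univ_nonempty fun i => (α i - β j).order
  obtain ⟨h, hh⟩ := ENat.ne_top_iff_exists.1 (order_eq_top.not.2 (sub_ne_zero.2 (hβ k₀).symm))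
  refine ⟨h, hk₀.trans hh.symm, ⟨k₀, hh.symm⟩, ?_⟩
  intro k hk S hS F hF q hq b hb C hC
  have hk' : (β j - α k).order = h := by rw [order_sub_comm, hk]
  have hmax (i : Fin p) : (β j - α i).order ≤ h := by
    rw [order_sub_comm, hh, ← hk₀]
    exact le_sup (f := fun i => (α i - β j).order) (mem_univ i)
  have hS' (i : Fin p) : i ∈ S ↔ (h : ℕ∞) ≤ (α i - α k).order := by simp [hS]
  have hFb : F.eval b = ∏ i ∈ S, (coeff h (β j) - coeff h (α i)) := by
    simp [hF, hb, Polynomial.eval_prod]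
  have hord : (∏ i, (β j - α i)).order = q := by
    simp [hq, order_prod, order_sub_eq_toNat_min hk' hmax]
  have hcoeff : coeff q (∏ i, (β j - α i)) = C * F.eval b := by
    rw [hq, coeff_prod_sub hk' hmax hS', hFb, hC]
  have hne : C * F.eval b ≠ 0 := hcoeff ▸ (order_eq_nat.1 hord).1
  have hcrit : ∑ i, ∏ l ∈ univ.erase i, (β j - α l) = 0 := by
    have hroot := congrArg (Polynomial.eval (β j)) hder
    rwa [Polynomial.eval_derivative_prod_X_sub_C, Polynomial.eval_mul, Polynomial.eval_prod,
      prod_eq_zero (mem_univ j) (by simp), mul_zero] at hroot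
  have hC0 : C * F.derivative.eval b = 0 := by
    rw [hC, hF, hb, Polynomial.eval_derivative_prod_X_sub_C,
      ← coeff_sum_prod_erase_sub hk' hmax hS', hcrit, map_zero]
  exact ⟨(mul_eq_zero.1 hC0).resolve_left (left_ne_zero_of_mul hne), right_ne_zero_of_mul hne,
    hord, hcoeff⟩

/-- Key step in the proof of Theorem 3: a root `β_j` of `∂f/∂x` not equal to any root
of `f` leaves the Kuo–Lu tree at a pseudo-ball `B = B(α_k, h)` of finite height
`h = max_i O(α_i, β_j)`; its leading coefficient `b = coeff_h β_j` is a critical point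
but not a root of `F_B`, and `f(β_j(y), y) = C · F_B(b) · y^(q(B)) + ⋯` with
`C · F_B(b) ≠ 0`. -/
theorem stmt_5 (p : ℕ) (hp : 2 ≤ p) (α : Fin p → PowerSeries ℂ)
    (β : Fin (p - 1) → PowerSeries ℂ)
    (hder : Polynomial.derivative (∏ i, (Polynomial.X - Polynomial.C (α i)))
      = (p : Polynomial (PowerSeries ℂ)) * ∏ j, (Polynomial.X - Polynomial.C (β j)))
    (j : Fin (p - 1)) (hβ : ∀ i, β j ≠ α i) :
    ∃ h : ℕ, Finset.univ.sup (fun i => (α i - β j).order) = (h : ℕ∞) ∧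
      (∃ k : Fin p, (α k - β j).order = (h : ℕ∞)) ∧
      ∀ k : Fin p, (α k - β j).order = (h : ℕ∞) →
        ∀ (S : Finset (Fin p)),
          S = (Finset.univ.filter fun i => (h : ℕ∞) ≤ (α i - α k).order) →
        ∀ (F : Polynomial ℂ),
          F = ∏ i ∈ S, (Polynomial.X - Polynomial.C (PowerSeries.coeff h (α i))) →
        ∀ (q : ℕ), q = ∑ i, (min (h : ℕ∞) ((α k - α i).order)).toNat →
        ∀ (b : ℂ), b = PowerSeries.coeff h (β j) →
        ∀ (C : ℂ),
          C = ∏ i ∈ Sᶜ, PowerSeries.coeff ((α k - α i).order.toNat) (α k - α i) →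
          F.derivative.eval b = 0 ∧ F.eval b ≠ 0 ∧
          (∏ i, (β j - α i)).order = (q : ℕ∞) ∧
          PowerSeries.coeff q (∏ i, (β j - α i)) = C * F.eval b :=
  stmt_5_general p α β hder j hβ
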